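/- For finite-dimensional Lie algebras L₁ and L₂, the exterior square satisfies (L₁ ⊕ L₂) ∧ (L₁ ⊕ L₂) ≅ (L₁ ∧ L₁) ⊕ (L₂ ∧ L₂) ⊕ (L₁/L₁² ⊗ L₂/L₂²). -/

import Mathlib

open Module Function

universe u v

/-! ### Product of Lie algebras -/

section ProdLie

variable (k : Type) [Field k]
variable (L₁ : Type*) (L₂ : Type*) [LieRing L₁] [LieRing L₂]

instance Prod.instLieRing : LieRing (L₁ × L₂) where
  bracket x y := (⁅x.1, y.1⁆, ⁅x.2, y.2⁆)
  add_lie x y z := by ext <;> exact add_lie _ _ _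
  lie_add x y z := by ext <;> exact lie_add _ _ _
  lie_self x := by ext <;> exact lie_self _
  leibniz_lie x y z := by ext <;> exact leibniz_lie _ _ _

instance Prod.instLieAlgebra [LieAlgebra k L₁] [LieAlgebra k L₂] :
    LieAlgebra k (L₁ × L₂) where
  lie_smul c x y := by ext <;> exact lie_smul _ _ _

end ProdLie

section Defs

variable (k : Type) [Field k]
variable (L : Type u) [LieRing L] [LieAlgebra k L]

/-- The derived subalgebra `L² = ⁅L, L⁆` as a Lie ideal. -/
def derived : LieIdeal k L := ⁅(⊤ : LieIdeal k L), (⊤ : LieIdeal k L)⁆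

/-- A Lie algebra is capable if it is isomorphic to `H / Z(H)` for some Lie algebra `H`. -/
def IsCapable : Prop :=
  ∃ (H : Type u) (_ : LieRing H) (_ : LieAlgebra k H),
    Nonempty (L ≃ₗ⁅k⁆ H ⧸ LieAlgebra.center k H)

/-- A surjective Lie algebra morphism with central kernel. -/
def IsCentralExtension {E : Type u} [LieRing E] [LieAlgebra k E] (φ : E →ₗ⁅k⁆ L) : Prop :=
  Function.Surjective φ ∧ φ.ker ≤ LieAlgebra.center k E

/-- The epicenter `Z^*(L)`: the intersection of the images `φ(Z(E))` over all central
extensions `φ : E → L`. -/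
def epicenter : LieIdeal k L :=
  sInf {I : LieIdeal k L |
    ∃ (E : Type u) (_ : LieRing E) (_ : LieAlgebra k E) (φ : E →ₗ⁅k⁆ L),
      IsCentralExtension k L φ ∧ (I : Set L) = φ '' (LieAlgebra.center k E)}

/-! ### The nonabelian exterior square -/

/-- The defining relations of the nonabelian exterior square of a Lie algebra. -/
def exteriorRels : Set (FreeLieAlgebra k (L × L)) :=
  {a | (∃ (x x' y : L), a = FreeLieAlgebra.of k (x + x', y) - FreeLieAlgebra.of k (x, y)
          - FreeLieAlgebra.of k (x', y)) ∨
       (∃ (x y y' : L), a = FreeLieAlgebra.of k (x, y + y') - FreeLieAlgebra.of k (x, y)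
          - FreeLieAlgebra.of k (x, y')) ∨
       (∃ (c : k) (x y : L), a = FreeLieAlgebra.of k (c • x, y) - c • FreeLieAlgebra.of k (x, y)) ∨
       (∃ (c : k) (x y : L), a = FreeLieAlgebra.of k (x, c • y) - c • FreeLieAlgebra.of k (x, y)) ∨
       (∃ (x x' y : L), a = FreeLieAlgebra.of k (⁅x, x'⁆, y) - FreeLieAlgebra.of k (x, ⁅x', y⁆)
          + FreeLieAlgebra.of k (x', ⁅x, y⁆)) ∨
       (∃ (x y y' : L), a = FreeLieAlgebra.of k (x, ⁅y, y'⁆) - FreeLieAlgebra.of k (⁅y', x⁆, y)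
          + FreeLieAlgebra.of k (⁅y, x⁆, y')) ∨
       (∃ (x y x' y' : L), a = ⁅FreeLieAlgebra.of k (x, y), FreeLieAlgebra.of k (x', y')⁆
          + FreeLieAlgebra.of k (⁅y, x⁆, ⁅x', y'⁆)) ∨
       (∃ (x : L), a = FreeLieAlgebra.of k (x, x))}

/-- The ideal of relations of the nonabelian exterior square. -/
noncomputable def exteriorIdeal : LieIdeal k (FreeLieAlgebra k (L × L)) :=
  LieSubmodule.lieSpan k _ (exteriorRels k L)

/-- The nonabelian exterior square `L ∧ L`. -/
abbrev ExteriorSquare := FreeLieAlgebra k (L × L) ⧸ exteriorIdeal k L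

variable {L} in
/-- The element `x ∧ y` of the nonabelian exterior square. -/
noncomputable def wedge (x y : L) : ExteriorSquare k L :=
  LieSubmodule.Quotient.mk' (exteriorIdeal k L) (FreeLieAlgebra.of k (x, y))

/-- The exterior center `Z^∧(L) = {x | x ∧ y = 0 for all y}`. -/
def exteriorCenter : Set L := {x | ∀ y : L, wedge k x y = 0}

end Defs

section Defs2

variable (k : Type) [Field k]
variable (L : Type u) [LieRing L] [LieAlgebra k L]

/-- The canonical free presentation `F(L) → L`. -/
noncomputable def pres : FreeLieAlgebra k L →ₗ⁅k⁆ L := FreeLieAlgebra.lift k id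

/-- The Schur multiplier computed from a presentation `ρ : F(L) → L'`,
namely `(ker ρ ∩ F²) / ⁅ker ρ, F⁆`. -/
abbrev multOf {L' : Type v} [LieRing L'] [LieAlgebra k L']
    (ρ : FreeLieAlgebra k L →ₗ⁅k⁆ L') : Type _ :=
  (ρ.ker ⊓ derived k (FreeLieAlgebra k L)).toSubmodule ⧸
    ((⁅ρ.ker, (⊤ : LieIdeal k (FreeLieAlgebra k L))⁆ :
        LieIdeal k (FreeLieAlgebra k L)).toSubmodule.comap
      (ρ.ker ⊓ derived k (FreeLieAlgebra k L)).toSubmodule.subtype)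

/-- The Schur multiplier `M(L) = (R ∩ F²)/⁅R, F⁆` for the canonical free
presentation `0 → R → F(L) → L → 0`. -/
noncomputable abbrev SchurMultiplier : Type _ := multOf k L (pres k L)

/-- The quotient map `L → L ⧸ N` as a morphism of Lie algebras. -/
def lieQuotMk (N : LieIdeal k L) : L →ₗ⁅k⁆ L ⧸ N :=
  { toLinearMap := (N : Submodule k L).mkQ
    map_lie' := rfl }

/-- The canonical presentation `F(L) → L ⧸ N` of a quotient of `L`. -/
noncomputable def presQ (N : LieIdeal k L) : FreeLieAlgebra k L →ₗ⁅k⁆ L ⧸ N :=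
  (lieQuotMk k L N).comp (pres k L)

end Defs2

section maps

variable (k : Type) [Field k]
variable (L : Type u) [LieRing L] [LieAlgebra k L]

lemma ker_le_kerQ (N : LieIdeal k L) : (pres k L).ker ≤ (presQ k L N).ker := by
  intro x hx
  rw [LieHom.mem_ker] at hx ⊢
  simp [presQ, LieHom.comp_apply, hx, lieQuotMk]

/-- The natural map `M(L) → M(L/N)` on Schur multipliers induced by a
(central) ideal `N` of `L`. -/
noncomputable def multMap (N : LieIdeal k L) :
    SchurMultiplier k L →ₗ[k] multOf k L (presQ k L N) :=
  Submodule.mapQ _ _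
    (Submodule.inclusion (by
      exact_mod_cast inf_le_inf_right (derived k (FreeLieAlgebra k L)) (ker_le_kerQ k L N)))
    (by
      intro x hx
      simp only [Submodule.mem_comap] at hx ⊢
      have hmono : (⁅(pres k L).ker, (⊤ : LieIdeal k (FreeLieAlgebra k L))⁆ :
          LieIdeal k (FreeLieAlgebra k L)) ≤
          ⁅(presQ k L N).ker, (⊤ : LieIdeal k (FreeLieAlgebra k L))⁆ :=
        LieSubmodule.mono_lie_left _ (ker_le_kerQ k L N)
      exact hmono hx)

end maps

section lift

variable {k : Type} [Field k]
variable {L : Type u} [LieRing L] [LieAlgebra k L]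
variable {L' : Type v} [LieRing L'] [LieAlgebra k L']

/-- Universal property of quotients of Lie algebras. -/
def lieQuotLift (I : LieIdeal k L) (f : L →ₗ⁅k⁆ L') (h : I ≤ f.ker) : (L ⧸ I) →ₗ⁅k⁆ L' :=
  { toLinearMap := (I : Submodule k L).liftQ f.toLinearMap (fun x hx => by
      have := h hx; rwa [LieHom.mem_ker] at this)
    map_lie' := by
      rintro ⟨x⟩ ⟨y⟩
      exact f.map_lie x y }

@[simp] lemma lieQuotLift_mk (I : LieIdeal k L) (f : L →ₗ⁅k⁆ L') (h : I ≤ f.ker) (x : L) :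
    lieQuotLift I f h (lieQuotMk k L I x) = f x := rfl

end lift

section extmaps

variable (k : Type) [Field k]
variable (L : Type u) [LieRing L] [LieAlgebra k L]

/-- `x ∧ y` rewritten via the quotient morphism. -/
lemma wedge_def (x y : L) :
    wedge k x y = lieQuotMk k _ (exteriorIdeal k L) (FreeLieAlgebra.of k (x, y)) := rfl

/-- The lift to the free Lie algebra of the map `(x, y) ↦ x ∧ y` valued in the
exterior square of a quotient of `L`. -/
noncomputable def extAux (N : LieIdeal k L) :
    FreeLieAlgebra k (L × L) →ₗ⁅k⁆ ExteriorSquare k (L ⧸ N) :=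
  FreeLieAlgebra.lift k fun p => wedge k (lieQuotMk k L N p.1) (lieQuotMk k L N p.2)

lemma wedge_mem_rel_zero {M : Type v} [LieRing M] [LieAlgebra k M]
    {a : FreeLieAlgebra k (M × M)} (ha : a ∈ exteriorRels k M) :
    lieQuotMk k _ (exteriorIdeal k M) a = 0 := by
  have h : a ∈ exteriorIdeal k M := LieSubmodule.subset_lieSpan ha
  show (exteriorIdeal k M : Submodule k (FreeLieAlgebra k (M × M))).mkQ a = 0
  rw [Submodule.mkQ_apply, Submodule.Quotient.mk_eq_zero]
  exact h

lemma extAux_rels (N : LieIdeal k L) : exteriorIdeal k L ≤ (extAux k L N).ker := by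
  rw [exteriorIdeal, LieSubmodule.lieSpan_le]
  intro a ha
  rw [SetLike.mem_coe, LieHom.mem_ker]
  set q := lieQuotMk k L N with hq
  have key : ∀ x y : L, extAux k L N (FreeLieAlgebra.of k (x, y)) =
      lieQuotMk k _ (exteriorIdeal k (L ⧸ N)) (FreeLieAlgebra.of k (q x, q y)) := by
    intro x y; rw [extAux, FreeLieAlgebra.lift_of_apply]; rfl
  obtain h|h|h|h|h|h|h|h := ha
  · obtain ⟨x, x', y, rfl⟩ := h
    simp only [map_sub, key]
    rw [← map_sub, ← map_sub]
    apply wedge_mem_rel_zero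
    exact Or.inl ⟨q x, q x', q y, by rw [map_add]⟩
  · obtain ⟨x, y, y', rfl⟩ := h
    simp only [map_sub, key]
    rw [← map_sub, ← map_sub]
    apply wedge_mem_rel_zero
    exact Or.inr (Or.inl ⟨q x, q y, q y', by rw [map_add]⟩)
  · obtain ⟨c, x, y, rfl⟩ := h
    simp only [map_sub, map_smul, key]
    rw [← map_smul (lieQuotMk k _ (exteriorIdeal k (L ⧸ N))) c
      (FreeLieAlgebra.of k (q x, q y)), ← map_sub]
    apply wedge_mem_rel_zero
    exact Or.inr (Or.inr (Or.inl ⟨c, q x, q y, rfl⟩))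
  · obtain ⟨c, x, y, rfl⟩ := h
    simp only [map_sub, map_smul, key]
    rw [← map_smul (lieQuotMk k _ (exteriorIdeal k (L ⧸ N))) c
      (FreeLieAlgebra.of k (q x, q y)), ← map_sub]
    apply wedge_mem_rel_zero
    exact Or.inr (Or.inr (Or.inr (Or.inl ⟨c, q x, q y, rfl⟩)))
  · obtain ⟨x, x', y, rfl⟩ := h
    simp only [map_sub, map_add, key]
    rw [← map_sub, ← map_add]
    apply wedge_mem_rel_zero
    refine Or.inr (Or.inr (Or.inr (Or.inr (Or.inl ⟨q x, q x', q y, ?_⟩))))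
    simp [LieHom.map_lie]
  · obtain ⟨x, y, y', rfl⟩ := h
    simp only [map_sub, map_add, key]
    rw [← map_sub, ← map_add]
    apply wedge_mem_rel_zero
    refine Or.inr (Or.inr (Or.inr (Or.inr (Or.inr (Or.inl ⟨q x, q y, q y', ?_⟩)))))
    simp [LieHom.map_lie]
  · obtain ⟨x, y, x', y', rfl⟩ := h
    simp only [map_add, LieHom.map_lie, key]
    rw [← LieHom.map_lie, ← map_add]
    apply wedge_mem_rel_zero
    refine Or.inr (Or.inr (Or.inr (Or.inr (Or.inr (Or.inr (Or.inl
      ⟨q x, q y, q x', q y', ?_⟩))))))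
    simp [LieHom.map_lie]
  · obtain ⟨x, rfl⟩ := h
    rw [key]
    apply wedge_mem_rel_zero
    exact Or.inr (Or.inr (Or.inr (Or.inr (Or.inr (Or.inr (Or.inr ⟨q x, rfl⟩))))))

/-- The natural morphism `L ∧ L → (L/N) ∧ (L/N)` of exterior squares. -/
noncomputable def extSqMap (N : LieIdeal k L) :
    ExteriorSquare k L →ₗ⁅k⁆ ExteriorSquare k (L ⧸ N) :=
  lieQuotLift (exteriorIdeal k L) (extAux k L N) (extAux_rels k L N)

/-- The commutator morphism `L ∧ L → L`, `x ∧ y ↦ ⁅x, y⁆`. -/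
noncomputable def commutatorMap : ExteriorSquare k L →ₗ⁅k⁆ L :=
  lieQuotLift (exteriorIdeal k L) (FreeLieAlgebra.lift k fun p : L × L => ⁅p.1, p.2⁆)
    (by
      rw [exteriorIdeal, LieSubmodule.lieSpan_le]
      intro a ha
      rw [SetLike.mem_coe, LieHom.mem_ker]
      obtain h|h|h|h|h|h|h|h := ha
      · obtain ⟨x, x', y, rfl⟩ := h
        simp [FreeLieAlgebra.lift_of_apply, add_lie]
      · obtain ⟨x, y, y', rfl⟩ := h
        simp [FreeLieAlgebra.lift_of_apply, lie_add]
      · obtain ⟨c, x, y, rfl⟩ := h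
        simp [FreeLieAlgebra.lift_of_apply, smul_lie]
      · obtain ⟨c, x, y, rfl⟩ := h
        simp [FreeLieAlgebra.lift_of_apply, lie_smul]
      · obtain ⟨x, x', y, rfl⟩ := h
        simp only [map_sub, map_add, FreeLieAlgebra.lift_of_apply, lie_lie]
        abel
      · obtain ⟨x, y, y', rfl⟩ := h
        simp only [map_sub, map_add, FreeLieAlgebra.lift_of_apply, lie_lie]
        rw [leibniz_lie x y' y, ← lie_skew y ⁅x, y'⁆]
        abel
      · obtain ⟨x, y, x', y', rfl⟩ := h
        simp only [map_add, LieHom.map_lie, FreeLieAlgebra.lift_of_apply]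
        rw [← lie_skew y x]
        simp
      · obtain ⟨x, rfl⟩ := h
        simp [FreeLieAlgebra.lift_of_apply])

end extmaps

section more

variable (k : Type) [Field k]
variable (L : Type u) [LieRing L] [LieAlgebra k L]

/-- A Lie algebra is a Heisenberg algebra `H(m)` (of dimension `2m + 1`) iff its derived
subalgebra coincides with its centre and is one-dimensional, and it has dimension `2m + 1`. -/
def IsHeisenberg (m : ℕ) : Prop :=
  derived k L = LieAlgebra.center k L ∧ Module.finrank k L = 2 * m + 1 ∧
    Module.finrank k (derived k L) = 1

/-- A vector space regarded as an abelian Lie algebra. -/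
def AbelianLieOf (V : Type v) : Type v := V

instance (V : Type v) [AddCommGroup V] : AddCommGroup (AbelianLieOf V) :=
  inferInstanceAs (AddCommGroup V)

instance (V : Type v) [AddCommGroup V] [Module k V] : Module k (AbelianLieOf V) :=
  inferInstanceAs (Module k V)

instance (V : Type v) [AddCommGroup V] : LieRing (AbelianLieOf V) where
  bracket _ _ := 0
  add_lie _ _ _ := by simp
  lie_add _ _ _ := by simp
  lie_self _ := rfl
  leibniz_lie _ _ _ := by simp

instance (V : Type v) [AddCommGroup V] [Module k V] : LieAlgebra k (AbelianLieOf V) where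
  lie_smul _ _ _ := by
    show (0 : AbelianLieOf V) = _ • (0 : AbelianLieOf V)
    simp

/-- A decomposition of `L` as the direct sum of a Heisenberg algebra `H(m)` and an
abelian Lie algebra of dimension `j`. -/
structure HeisenbergAbelianDecomp (m j : ℕ) where
  H : Type u
  A : Type u
  [instHL : LieRing H]
  [instHA : LieAlgebra k H]
  [instAL : LieRing A]
  [instAA : LieAlgebra k A]
  heis : IsHeisenberg k H m
  abel : IsLieAbelian A
  dimA : Module.finrank k A = j
  equiv : Nonempty (L ≃ₗ⁅k⁆ H × A)

/-- The projection `H × A → H` as a Lie algebra morphism. -/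
def lieFst (H A : Type u) [LieRing H] [LieAlgebra k H] [LieRing A] [LieAlgebra k A] :
    H × A →ₗ⁅k⁆ H :=
  { toLinearMap := LinearMap.fst k H A
    map_lie' := rfl }

end more

/-! The isomorphism sends `x ∧ y` to `(x₁ ∧ y₁, x₂ ∧ y₂, x̄₁ ⊗ ȳ₂ - ȳ₁ ⊗ x̄₂)`. The third
component respects the defining relations of the exterior square because it is alternating and
vanishes as soon as one argument is a bracket. The inverse sends `(a, b, ū ⊗ v̄)` to
`ι₁ a + ι₂ b + (u, 0) ∧ (0, v)`, with `ι₁, ι₂` induced by the inclusions; the last term only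
depends on `ū` and `v̄` because `(u, 0)` and `(0, v)` commute, so that `(⁅u, u'⁆, 0) ∧ (0, v) = 0`
by the Lie relation. Both composites are the identity on wedges, which span the exterior square;
for `x ∧ y` this is the bilinear expansion along `x = (x₁, 0) + (0, x₂)`. -/

open TensorProduct

section Wedge

variable {k : Type} [Field k] {L : Type*} [LieRing L] [LieAlgebra k L]

lemma mk'_of_eq_wedge (x y : L) :
    LieSubmodule.Quotient.mk' (exteriorIdeal k L) (FreeLieAlgebra.of k (x, y)) = wedge k x y :=
  rfl

lemma mk'_eq_zero_of_mem_exteriorRels {a : FreeLieAlgebra k (L × L)}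
    (ha : a ∈ exteriorRels k L) : LieSubmodule.Quotient.mk' (exteriorIdeal k L) a = 0 :=
  (LieSubmodule.Quotient.mk_eq_zero _).mpr (LieSubmodule.subset_lieSpan ha)

lemma wedge_add_left (x x' y : L) : wedge k (x + x') y = wedge k x y + wedge k x' y := by
  have h := mk'_eq_zero_of_mem_exteriorRels (k := k) (Or.inl ⟨x, x', y, rfl⟩)
  simp only [map_sub, mk'_of_eq_wedge] at h
  rw [← sub_eq_zero, ← h]
  abel

lemma wedge_add_right (x y y' : L) : wedge k x (y + y') = wedge k x y + wedge k x y' := by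
  have h := mk'_eq_zero_of_mem_exteriorRels (k := k) (Or.inr <| Or.inl ⟨x, y, y', rfl⟩)
  simp only [map_sub, mk'_of_eq_wedge] at h
  rw [← sub_eq_zero, ← h]
  abel

lemma wedge_smul_left (c : k) (x y : L) : wedge k (c • x) y = c • wedge k x y := by
  have h := mk'_eq_zero_of_mem_exteriorRels (Or.inr <| Or.inr <| Or.inl ⟨c, x, y, rfl⟩)
  simp only [map_sub, map_smul, mk'_of_eq_wedge] at h
  rw [← sub_eq_zero, h]

lemma wedge_smul_right (c : k) (x y : L) : wedge k x (c • y) = c • wedge k x y := by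
  have h := mk'_eq_zero_of_mem_exteriorRels
    (Or.inr <| Or.inr <| Or.inr <| Or.inl ⟨c, x, y, rfl⟩)
  simp only [map_sub, map_smul, mk'_of_eq_wedge] at h
  rw [← sub_eq_zero, h]

lemma wedge_lie_left (x x' y : L) :
    wedge k ⁅x, x'⁆ y = wedge k x ⁅x', y⁆ - wedge k x' ⁅x, y⁆ := by
  have h := mk'_eq_zero_of_mem_exteriorRels (k := k)
    (Or.inr <| Or.inr <| Or.inr <| Or.inr <| Or.inl ⟨x, x', y, rfl⟩)
  simp only [map_add, map_sub, mk'_of_eq_wedge] at h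
  rw [← sub_eq_zero, ← h]
  abel

lemma wedge_lie_right (x y y' : L) :
    wedge k x ⁅y, y'⁆ = wedge k ⁅y', x⁆ y - wedge k ⁅y, x⁆ y' := by
  have h := mk'_eq_zero_of_mem_exteriorRels (k := k)
    (Or.inr <| Or.inr <| Or.inr <| Or.inr <| Or.inr <| Or.inl ⟨x, y, y', rfl⟩)
  simp only [map_add, map_sub, mk'_of_eq_wedge] at h
  rw [← sub_eq_zero, ← h]
  abel

lemma wedge_self (x : L) : wedge k x x = 0 :=
  mk'_eq_zero_of_mem_exteriorRels <| Or.inr <| Or.inr <| Or.inr <| Or.inr <| Or.inr <| Or.inr <|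
    Or.inr ⟨x, rfl⟩

variable (k L) in
noncomputable def wedgeBilin : L →ₗ[k] L →ₗ[k] ExteriorSquare k L :=
  LinearMap.mk₂ k (wedge k) wedge_add_left wedge_smul_left wedge_add_right wedge_smul_right

@[simp] lemma wedgeBilin_apply (x y : L) : wedgeBilin k L x y = wedge k x y := rfl

lemma isAlt_wedgeBilin : (wedgeBilin k L).IsAlt := wedge_self

lemma neg_wedge (x y : L) : -wedge k x y = wedge k y x := isAlt_wedgeBilin.neg x y

@[simp] lemma wedge_zero_left (y : L) : wedge k 0 y = 0 := (wedgeBilin k L).map_zero₂ y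

@[simp] lemma wedge_zero_right (x : L) : wedge k x 0 = 0 := (wedgeBilin k L x).map_zero

lemma lie_wedge_wedge (x y x' y' : L) :
    ⁅wedge k x y, wedge k x' y'⁆ = wedge k ⁅x, y⁆ ⁅x', y'⁆ := by
  have h := mk'_eq_zero_of_mem_exteriorRels (k := k)
    (Or.inr <| Or.inr <| Or.inr <| Or.inr <| Or.inr <| Or.inr <| Or.inl ⟨x, y, x', y', rfl⟩)
  rw [map_add, LieSubmodule.Quotient.mk'_apply, LieSubmodule.Quotient.mk_bracket] at h
  change ⁅wedge k x y, wedge k x' y'⁆ + wedgeBilin k L ⁅y, x⁆ ⁅x', y'⁆ = 0 at h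
  rwa [← lie_skew y x, map_neg, LinearMap.neg_apply, add_neg_eq_zero] at h

lemma wedge_lie_left_eq_zero {x x' y : L} (hx : ⁅x, y⁆ = 0) (hx' : ⁅x', y⁆ = 0) :
    wedge k ⁅x, x'⁆ y = 0 := by
  rw [wedge_lie_left, hx, hx', wedge_zero_right, wedge_zero_right, sub_zero]

lemma wedge_lie_right_eq_zero {x y y' : L} (hy : ⁅y, x⁆ = 0) (hy' : ⁅y', x⁆ = 0) :
    wedge k x ⁅y, y'⁆ = 0 := by
  rw [wedge_lie_right, hy, hy', wedge_zero_left, wedge_zero_left, sub_zero]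

end Wedge

section UniversalProperty

variable {k : Type} [Field k] {L : Type*} [LieRing L] [LieAlgebra k L]
variable {M : Type*} [LieRing M] [LieAlgebra k M]

/-- The relations `exteriorRels`, for a bilinear map (bilinearity accounts for the first four). -/
structure IsExteriorPairing (f : L →ₗ[k] L →ₗ[k] M) : Prop where
  lie_left : ∀ x x' y, f ⁅x, x'⁆ y = f x ⁅x', y⁆ - f x' ⁅x, y⁆
  lie_right : ∀ x y y', f x ⁅y, y'⁆ = f ⁅y', x⁆ y - f ⁅y, x⁆ y'
  lie_apply_apply : ∀ x y x' y', ⁅f x y, f x' y'⁆ = f ⁅x, y⁆ ⁅x', y'⁆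
  isAlt : f.IsAlt

lemma isExteriorPairing_wedgeBilin : IsExteriorPairing (wedgeBilin k L) :=
  ⟨wedge_lie_left, wedge_lie_right, lie_wedge_wedge, isAlt_wedgeBilin⟩

lemma IsExteriorPairing.compl₁₂ {f : L →ₗ[k] L →ₗ[k] M} (hf : IsExteriorPairing f)
    {L' : Type*} [LieRing L'] [LieAlgebra k L'] (g : L' →ₗ⁅k⁆ L) :
    IsExteriorPairing (f.compl₁₂ (g : L' →ₗ[k] L) g) where
  lie_left x x' y := by simp [hf.lie_left]
  lie_right x y y' := by simp [hf.lie_right]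
  lie_apply_apply x y x' y' := by simp [hf.lie_apply_apply]
  isAlt x := hf.isAlt (g x)

lemma IsExteriorPairing.of_isLieAbelian [IsLieAbelian M] {f : L →ₗ[k] L →ₗ[k] M}
    (hf : f.IsAlt) (hlie : ∀ x y z : L, f ⁅x, y⁆ z = 0) : IsExteriorPairing f where
  lie_left x x' y := by rw [hlie, ← hf.neg, hlie, ← hf.neg, hlie, neg_zero, sub_zero]
  lie_right x y y' := by rw [← hf.neg, hlie, hlie, hlie, neg_zero, sub_zero]
  lie_apply_apply x y x' y' := by rw [hlie, trivial_lie_zero]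
  isAlt := hf

namespace ExteriorSquare

lemma exteriorIdeal_le_ker_lift {f : L →ₗ[k] L →ₗ[k] M} (hf : IsExteriorPairing f) :
    exteriorIdeal k L ≤ (FreeLieAlgebra.lift k fun p : L × L => f p.1 p.2).ker := by
  rw [exteriorIdeal, LieSubmodule.lieSpan_le]
  rintro a (⟨x, x', y, rfl⟩ | ⟨x, y, y', rfl⟩ | ⟨c, x, y, rfl⟩ | ⟨c, x, y, rfl⟩ |
    ⟨x, x', y, rfl⟩ | ⟨x, y, y', rfl⟩ | ⟨x, y, x', y', rfl⟩ | ⟨x, rfl⟩)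
  · simp
  · simp
  · simp
  · simp
  · simp [hf.lie_left]
  · simp [hf.lie_right]
  · simp only [SetLike.mem_coe, LieHom.mem_ker, map_add, LieHom.map_lie,
      FreeLieAlgebra.lift_of_apply]
    rw [hf.lie_apply_apply, ← lie_skew x y, map_neg, LinearMap.neg_apply, neg_add_cancel]
  · simp [hf.isAlt.self_eq_zero]

noncomputable def lift (f : L →ₗ[k] L →ₗ[k] M) (hf : IsExteriorPairing f) :
    ExteriorSquare k L →ₗ⁅k⁆ M :=
  lieQuotLift (exteriorIdeal k L) _ (exteriorIdeal_le_ker_lift hf)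

@[simp] lemma lift_wedge {f : L →ₗ[k] L →ₗ[k] M} (hf : IsExteriorPairing f) (x y : L) :
    lift f hf (wedge k x y) = f x y :=
  FreeLieAlgebra.lift_of_apply _ _

noncomputable def map (f : L →ₗ⁅k⁆ M) : ExteriorSquare k L →ₗ⁅k⁆ ExteriorSquare k M :=
  lift _ (isExteriorPairing_wedgeBilin.compl₁₂ f)

@[simp] lemma map_wedge (f : L →ₗ⁅k⁆ M) (x y : L) :
    map f (wedge k x y) = wedge k (f x) (f y) :=
  lift_wedge _ x y

open Submodule in
lemma span_range_wedge : span k (Set.range fun p : L × L => wedge k p.1 p.2) = ⊤ := by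
  set S := Set.range fun p : L × L => wedge k p.1 p.2
  have lie_mem {a b} (ha : a ∈ span k S) (hb : b ∈ span k S) : ⁅a, b⁆ ∈ span k S := by
    let bracket := LinearMap.mk₂ k
      (⁅·, ·⁆ : ExteriorSquare k L → ExteriorSquare k L → ExteriorSquare k L)
      add_lie smul_lie lie_add lie_smul
    have hle : map₂ bracket (span k S) (span k S) ≤ span k S := by
      rw [map₂_span_span, span_le]
      rintro _ ⟨_, ⟨p, rfl⟩, _, ⟨q, rfl⟩, rfl⟩
      exact subset_span ⟨(⁅p.1, p.2⁆, ⁅q.1, q.2⁆), (lie_wedge_wedge ..).symm⟩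
    exact hle (apply_mem_map₂ _ ha hb)
  let W : LieSubalgebra k (ExteriorSquare k L) := { span k S with lie_mem' := lie_mem }
  -- `L ∧ L` is generated as a Lie algebra by the wedges, which all lie in `W`
  let g : FreeLieAlgebra k (L × L) →ₗ⁅k⁆ W :=
    FreeLieAlgebra.lift k fun p => ⟨wedge k p.1 p.2, subset_span ⟨p, rfl⟩⟩
  have hg : lieQuotMk k _ (exteriorIdeal k L) = W.incl.comp g :=
    FreeLieAlgebra.hom_ext fun p => by simp [g]; rfl
  refine eq_top_iff.mpr fun e _ => ?_
  obtain ⟨a, rfl⟩ := LieSubmodule.Quotient.surjective_mk' _ e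
  exact (LieHom.congr_fun hg a).symm ▸ (g a).2

lemma linearMap_ext {V : Type*} [AddCommGroup V] [Module k V]
    {g g' : ExteriorSquare k L →ₗ[k] V} (h : ∀ x y, g (wedge k x y) = g' (wedge k x y)) :
    g = g' :=
  LinearMap.ext_on_range span_range_wedge fun p => h p.1 p.2

end ExteriorSquare

end UniversalProperty

section Abelianization

variable {k : Type} [Field k] {L : Type*} [LieRing L] [LieAlgebra k L]

lemma derived_le_ker {V : Type*} [AddCommGroup V] [Module k V] {g : L →ₗ[k] V}
    (hg : ∀ x y : L, g ⁅x, y⁆ = 0) : (derived k L).toSubmodule ≤ LinearMap.ker g := by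
  rw [derived, LieSubmodule.lieIdeal_oper_eq_linear_span', Submodule.span_le]
  rintro _ ⟨x, -, y, -, rfl⟩
  exact hg x y

lemma lieQuotMk_surjective (N : LieIdeal k L) : Function.Surjective (lieQuotMk k L N) :=
  LieSubmodule.Quotient.surjective_mk' N

@[simp] lemma lieQuotMk_derived_lie (x y : L) : lieQuotMk k L (derived k L) ⁅x, y⁆ = 0 :=
  (LieSubmodule.Quotient.mk_eq_zero _).mpr
    (LieSubmodule.lie_mem_lie (LieSubmodule.mem_top x) (LieSubmodule.mem_top y))

instance (V : Type*) [AddCommGroup V] : IsLieAbelian (AbelianLieOf V) := ⟨fun _ _ => rfl⟩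

variable (k) in
def AbelianLieOf.linearEquiv (V : Type*) [AddCommGroup V] [Module k V] :
    V ≃ₗ[k] AbelianLieOf V :=
  LinearEquiv.refl k V

end Abelianization

section Product

variable {k : Type} [Field k] {L₁ L₂ : Type*} [LieRing L₁] [LieAlgebra k L₁] [LieRing L₂]
  [LieAlgebra k L₂]

variable (k L₁ L₂) in
noncomputable def crossPairing : L₁ × L₂ →ₗ[k] L₁ × L₂ →ₗ[k]
    AbelianLieOf ((L₁ ⧸ derived k L₁) ⊗[k] (L₂ ⧸ derived k L₂)) :=
  let β := (TensorProduct.mk k _ _).compl₁₂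
    ((lieQuotMk k L₁ (derived k L₁)).toLinearMap ∘ₗ LinearMap.fst k L₁ L₂)
    ((lieQuotMk k L₂ (derived k L₂)).toLinearMap ∘ₗ LinearMap.snd k L₁ L₂)
  (β - β.flip).compr₂ (AbelianLieOf.linearEquiv k _).toLinearMap

@[simp] lemma crossPairing_apply (x y : L₁ × L₂) :
    crossPairing k L₁ L₂ x y = AbelianLieOf.linearEquiv k _
      (lieQuotMk k L₁ _ x.1 ⊗ₜ lieQuotMk k L₂ _ y.2 -
        lieQuotMk k L₁ _ y.1 ⊗ₜ lieQuotMk k L₂ _ x.2) :=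
  rfl

variable (k L₁ L₂) in
lemma isExteriorPairing_crossPairing : IsExteriorPairing (crossPairing k L₁ L₂) :=
  .of_isLieAbelian (fun x => by simp) fun x y z => by simp [-LieHom.map_lie]

lemma wedge_lie_inl_inr (a a' : L₁) (b : L₂) :
    wedge k ((⁅a, a'⁆, 0) : L₁ × L₂) (0, b) = 0 := by
  have h : ((⁅a, a'⁆, 0) : L₁ × L₂) = ⁅((a, 0) : L₁ × L₂), (a', 0)⁆ := by ext <;> simp
  rw [h]
  exact wedge_lie_left_eq_zero (by ext <;> simp) (by ext <;> simp)

lemma wedge_inl_lie_inr (a : L₁) (b b' : L₂) :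
    wedge k ((a, 0) : L₁ × L₂) (0, ⁅b, b'⁆) = 0 := by
  have h : ((0, ⁅b, b'⁆) : L₁ × L₂) = ⁅((0, b) : L₁ × L₂), (0, b')⁆ := by ext <;> simp
  rw [h]
  exact wedge_lie_right_eq_zero (by ext <;> simp) (by ext <;> simp)

variable (k L₁ L₂) in
noncomputable def mixedWedge : (L₁ ⧸ derived k L₁) →ₗ[k] (L₂ ⧸ derived k L₂) →ₗ[k]
    ExteriorSquare k (L₁ × L₂) :=
  ((wedgeBilin k (L₁ × L₂)).compl₁₂ (LinearMap.inl k L₁ L₂) (LinearMap.inr k L₁ L₂)).liftQ₂ _ _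
    (derived_le_ker fun a a' => LinearMap.ext fun b => wedge_lie_inl_inr a a' b)
    (derived_le_ker fun b b' => LinearMap.ext fun a => wedge_inl_lie_inr a b b')

@[simp] lemma mixedWedge_apply (a : L₁) (b : L₂) :
    mixedWedge k L₁ L₂ (lieQuotMk k L₁ _ a) (lieQuotMk k L₂ _ b) =
      wedge k ((a, 0) : L₁ × L₂) (0, b) :=
  rfl

lemma wedge_eq_add_wedge_inl_inr (x y : L₁ × L₂) :
    wedge k x y = wedge k ((x.1, 0) : L₁ × L₂) (y.1, 0) + (wedge k ((0, x.2) : L₁ × L₂) (0, y.2) +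
      (wedge k ((x.1, 0) : L₁ × L₂) (0, y.2) - wedge k ((y.1, 0) : L₁ × L₂) (0, x.2))) := by
  obtain ⟨x₁, x₂⟩ := x
  obtain ⟨y₁, y₂⟩ := y
  have hx : ((x₁, x₂) : L₁ × L₂) = (x₁, 0) + (0, x₂) := by simp
  have hy : ((y₁, y₂) : L₁ × L₂) = (y₁, 0) + (0, y₂) := by simp
  conv_lhs => rw [hx, hy, wedge_add_left, wedge_add_right, wedge_add_right,
    ← neg_wedge (y₁, 0) (0, x₂)]
  abel

namespace ExteriorSquare

variable (k L₁ L₂) in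
noncomputable def toProd : ExteriorSquare k (L₁ × L₂) →ₗ⁅k⁆ ExteriorSquare k L₁ ×
    ExteriorSquare k L₂ × AbelianLieOf ((L₁ ⧸ derived k L₁) ⊗[k] (L₂ ⧸ derived k L₂)) :=
  (map (LieHom.fst k L₁ L₂)).prod
    ((map (LieHom.snd k L₁ L₂)).prod (lift _ (isExteriorPairing_crossPairing k L₁ L₂)))

@[simp] lemma toProd_wedge (x y : L₁ × L₂) :
    toProd k L₁ L₂ (wedge k x y) =
      (wedge k x.1 y.1, wedge k x.2 y.2, crossPairing k L₁ L₂ x y) := by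
  simp [toProd]

variable (k L₁ L₂) in
noncomputable def ofProd : ExteriorSquare k L₁ × ExteriorSquare k L₂ ×
    AbelianLieOf ((L₁ ⧸ derived k L₁) ⊗[k] (L₂ ⧸ derived k L₂)) →ₗ[k]
    ExteriorSquare k (L₁ × L₂) :=
  (map (LieHom.inl k L₁ L₂)).toLinearMap.coprod ((map (LieHom.inr k L₁ L₂)).toLinearMap.coprod
    (TensorProduct.lift (mixedWedge k L₁ L₂) ∘ₗ (AbelianLieOf.linearEquiv k _).symm.toLinearMap))

@[simp] lemma ofProd_apply (p : ExteriorSquare k L₁ × ExteriorSquare k L₂ ×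
    AbelianLieOf ((L₁ ⧸ derived k L₁) ⊗[k] (L₂ ⧸ derived k L₂))) :
    ofProd k L₁ L₂ p = map (LieHom.inl k L₁ L₂) p.1 + (map (LieHom.inr k L₁ L₂) p.2.1 +
      TensorProduct.lift (mixedWedge k L₁ L₂) ((AbelianLieOf.linearEquiv k _).symm p.2.2)) :=
  rfl

lemma ofProd_toProd (e : ExteriorSquare k (L₁ × L₂)) :
    ofProd k L₁ L₂ (toProd k L₁ L₂ e) = e := by
  suffices ofProd k L₁ L₂ ∘ₗ (toProd k L₁ L₂).toLinearMap = LinearMap.id from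
    LinearMap.congr_fun this e
  refine linearMap_ext fun x y => ?_
  simp [wedge_eq_add_wedge_inl_inr x y]

lemma toProd_map_inl (a : ExteriorSquare k L₁) :
    toProd k L₁ L₂ (map (LieHom.inl k L₁ L₂) a) = (a, 0, 0) := by
  suffices (toProd k L₁ L₂).toLinearMap ∘ₗ (map (LieHom.inl k L₁ L₂)).toLinearMap =
      LinearMap.inl k _ _ from LinearMap.congr_fun this a
  refine linearMap_ext fun x y => ?_
  simp

lemma toProd_map_inr (b : ExteriorSquare k L₂) :
    toProd k L₁ L₂ (map (LieHom.inr k L₁ L₂) b) = (0, b, 0) := by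
  suffices (toProd k L₁ L₂).toLinearMap ∘ₗ (map (LieHom.inr k L₁ L₂)).toLinearMap =
      LinearMap.inr k _ _ ∘ₗ LinearMap.inl k _ _ from LinearMap.congr_fun this b
  refine linearMap_ext fun x y => ?_
  simp

lemma toProd_lift_mixedWedge (t : (L₁ ⧸ derived k L₁) ⊗[k] (L₂ ⧸ derived k L₂)) :
    toProd k L₁ L₂ (TensorProduct.lift (mixedWedge k L₁ L₂) t) =
      (0, 0, AbelianLieOf.linearEquiv k _ t) := by
  suffices (toProd k L₁ L₂).toLinearMap ∘ₗ TensorProduct.lift (mixedWedge k L₁ L₂) =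
      LinearMap.inr k _ _ ∘ₗ LinearMap.inr k _ _ ∘ₗ (AbelianLieOf.linearEquiv k _).toLinearMap
    from LinearMap.congr_fun this t
  refine TensorProduct.ext' fun a b => ?_
  obtain ⟨a, rfl⟩ := lieQuotMk_surjective (derived k L₁) a
  obtain ⟨b, rfl⟩ := lieQuotMk_surjective (derived k L₂) b
  simp

lemma toProd_ofProd (p : ExteriorSquare k L₁ × ExteriorSquare k L₂ ×
    AbelianLieOf ((L₁ ⧸ derived k L₁) ⊗[k] (L₂ ⧸ derived k L₂))) :
    toProd k L₁ L₂ (ofProd k L₁ L₂ p) = p := by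
  ext <;> simp [toProd_map_inl, toProd_map_inr, toProd_lift_mixedWedge]

variable (k L₁ L₂) in
noncomputable def prodEquiv : ExteriorSquare k (L₁ × L₂) ≃ₗ⁅k⁆ ExteriorSquare k L₁ ×
    ExteriorSquare k L₂ × AbelianLieOf ((L₁ ⧸ derived k L₁) ⊗[k] (L₂ ⧸ derived k L₂)) :=
  { toProd k L₁ L₂ with
    invFun := ofProd k L₁ L₂
    left_inv := ofProd_toProd
    right_inv := toProd_ofProd }

end ExteriorSquare

end Product

theorem exterior_square_prod_general (k : Type) [Field k] (L₁ L₂ : Type u) [LieRing L₁]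
    [LieAlgebra k L₁] [LieRing L₂] [LieAlgebra k L₂] :
    Nonempty ((ExteriorSquare k (L₁ × L₂)) ≃ₗ⁅k⁆
      (ExteriorSquare k L₁ × ExteriorSquare k L₂ ×
        AbelianLieOf (TensorProduct k (L₁ ⧸ derived k L₁) (L₂ ⧸ derived k L₂)))) :=
  ⟨ExteriorSquare.prodEquiv k L₁ L₂⟩

/-- `(L₁ ⊕ L₂) ∧ (L₁ ⊕ L₂) ≅ (L₁ ∧ L₁) ⊕ (L₂ ∧ L₂) ⊕ (L₁/L₁² ⊗ L₂/L₂²)`,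
the last factor being regarded as an abelian Lie algebra. -/
theorem exterior_square_prod (k : Type) [Field k] (L₁ L₂ : Type u) [LieRing L₁]
    [LieAlgebra k L₁] [LieRing L₂] [LieAlgebra k L₂] [Module.Finite k L₁]
    [Module.Finite k L₂] :
    Nonempty ((ExteriorSquare k (L₁ × L₂)) ≃ₗ⁅k⁆
      (ExteriorSquare k L₁ × ExteriorSquare k L₂ ×
        AbelianLieOf (TensorProduct k (L₁ ⧸ derived k L₁) (L₂ ⧸ derived k L₂)))) :=
  exterior_square_prod_general k L₁ L₂
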